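/- arXiv:1504.03572 — 7 statements merged into one kernel-verified Lean document; each statement's English description precedes it below -/
import Mathlib

section
/- Every Hermitian operator G on H⊗H that is invariant under conjugation by the SWAP operator can be written as G = 1⊗A + A⊗1 + Σ_i b_i B_i⊗B_i where A and the B_i are Hermitian operators on H and b_i ∈ ℝ. -/
/-!
Every matrix on `H ⊗ H` is a complex combination `∑ c_j • P_j ⊗ₖ Q_j` of Kronecker products of
Hermitian matrices (split both Kronecker factors of a matrix unit as `ℜ + I • ℑ`). A Hermitian, SWAP-invariant `G` equals
the average of itself, its adjoint and their SWAP conjugates; on `c • P ⊗ₖ Q` this average is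
`(re c / 2) • (P ⊗ₖ Q + Q ⊗ₖ P)`, and the polarization identity
`2 • (P ⊗ₖ Q + Q ⊗ₖ P) = (P + Q) ⊗ₖ (P + Q) - (P - Q) ⊗ₖ (P - Q)` turns this into a real
combination of terms `B ⊗ₖ B`. So the decomposition holds already with `A = 0`.
-/

open Matrix Kronecker
open scoped ComplexStarModule

noncomputable section

/-- The SWAP operator on ℂ^d ⊗ ℂ^d. -/
def swapM (d : ℕ) : Matrix (Fin d × Fin d) (Fin d × Fin d) ℂ :=
  Matrix.of fun p q => if p.1 = q.2 ∧ p.2 = q.1 then 1 else 0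

lemma swapM_eq_toMatrix (d : ℕ) :
    swapM d = (Equiv.prodComm (Fin d) (Fin d)).toPEquiv.toMatrix := by
  ext p q
  simp [swapM, PEquiv.toMatrix_apply, Prod.ext_iff, and_comm, eq_comm]

lemma swapM_mul_mul_swapM {d : ℕ} (M : Matrix (Fin d × Fin d) (Fin d × Fin d) ℂ) :
    swapM d * M * swapM d = M.submatrix Prod.swap Prod.swap := by
  rw [swapM_eq_toMatrix, PEquiv.toMatrix_toPEquiv_mul, PEquiv.mul_toMatrix_toPEquiv]
  rfl

lemma kronecker_submatrix_swap {l m p q α : Type*} [CommMagma α] (A : Matrix l m α)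
    (B : Matrix p q α) :
    (A ⊗ₖ B).submatrix Prod.swap Prod.swap = B ⊗ₖ A := by
  ext; simp [mul_comm]

lemma sub_kronecker {l m p q α : Type*} [NonUnitalNonAssocRing α] (A B : Matrix l m α)
    (C : Matrix p q α) :
    (A - B) ⊗ₖ C = A ⊗ₖ C - B ⊗ₖ C := by
  ext; simp [sub_mul]

lemma kronecker_sub {l m p q α : Type*} [NonUnitalNonAssocRing α] (A : Matrix l m α)
    (B C : Matrix p q α) :
    A ⊗ₖ (B - C) = A ⊗ₖ B - A ⊗ₖ C := by
  ext; simp [mul_sub]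

section
variable {n : Type*}

lemma exists_isHermitian_add_I_smul (X : Matrix n n ℂ) :
    ∃ H K : Matrix n n ℂ, H.IsHermitian ∧ K.IsHermitian ∧ H + Complex.I • K = X :=
  ⟨ℜ X, ℑ X, isHermitian_iff_isSelfAdjoint.mpr (ℜ X).2,
    isHermitian_iff_isSelfAdjoint.mpr (ℑ X).2, realPart_add_I_smul_imaginaryPart X⟩

variable (n) in
def symmKroneckerSpan : Submodule ℝ (Matrix (n × n) (n × n) ℂ) :=
  Submodule.span ℝ {X | ∃ B : Matrix n n ℂ, B.IsHermitian ∧ B ⊗ₖ B = X}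

lemma kronecker_add_kronecker_mem_symmKroneckerSpan {P Q : Matrix n n ℂ}
    (hP : P.IsHermitian) (hQ : Q.IsHermitian) : P ⊗ₖ Q + Q ⊗ₖ P ∈ symmKroneckerSpan n := by
  have polarization : P ⊗ₖ Q + Q ⊗ₖ P =
      (2⁻¹ : ℝ) • ((P + Q) ⊗ₖ (P + Q)) - (2⁻¹ : ℝ) • ((P - Q) ⊗ₖ (P - Q)) := by
    simp only [add_kronecker, kronecker_add, sub_kronecker, kronecker_sub]
    module
  rw [polarization]
  exact sub_mem (Submodule.smul_mem _ _ (Submodule.subset_span ⟨_, hP.add hQ, rfl⟩))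
    (Submodule.smul_mem _ _ (Submodule.subset_span ⟨_, hP.sub hQ, rfl⟩))

def swapHermitianAverage (M : Matrix (n × n) (n × n) ℂ) : Matrix (n × n) (n × n) ℂ :=
  (4⁻¹ : ℝ) • (M + Mᴴ + M.submatrix Prod.swap Prod.swap + Mᴴ.submatrix Prod.swap Prod.swap)

lemma swapHermitianAverage_add (M N : Matrix (n × n) (n × n) ℂ) :
    swapHermitianAverage (M + N) = swapHermitianAverage M + swapHermitianAverage N := by
  simp only [swapHermitianAverage, conjTranspose_add, submatrix_add, Pi.add_apply]
  module

lemma swapHermitianAverage_eq_self {G : Matrix (n × n) (n × n) ℂ} (hG : G.IsHermitian)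
    (hswap : G.submatrix Prod.swap Prod.swap = G) : swapHermitianAverage G = G := by
  rw [swapHermitianAverage, hG.eq, hswap]
  module

lemma swapHermitianAverage_smul_kronecker (c : ℂ) {P Q : Matrix n n ℂ}
    (hP : P.IsHermitian) (hQ : Q.IsHermitian) :
    swapHermitianAverage (c • (P ⊗ₖ Q)) = (c.re / 2) • (P ⊗ₖ Q + Q ⊗ₖ P) := by
  simp only [swapHermitianAverage, conjTranspose_smul, conjTranspose_kronecker, hP.eq, hQ.eq,
    submatrix_smul, Pi.smul_apply, kronecker_submatrix_swap]
  match_scalars <;> simp [Complex.ext_iff] <;> ring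

lemma swapHermitianAverage_smul_kronecker_mem (c : ℂ) {P Q : Matrix n n ℂ}
    (hP : P.IsHermitian) (hQ : Q.IsHermitian) :
    swapHermitianAverage (c • (P ⊗ₖ Q)) ∈ symmKroneckerSpan n := by
  rw [swapHermitianAverage_smul_kronecker c hP hQ]
  exact Submodule.smul_mem _ _ (kronecker_add_kronecker_mem_symmKroneckerSpan hP hQ)

lemma swapHermitianAverage_kronecker_mem (X Y : Matrix n n ℂ) :
    swapHermitianAverage (X ⊗ₖ Y) ∈ symmKroneckerSpan n := by
  obtain ⟨H, K, hH, hK, rfl⟩ := exists_isHermitian_add_I_smul X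
  obtain ⟨H', K', hH', hK', rfl⟩ := exists_isHermitian_add_I_smul Y
  have expand : (H + Complex.I • K) ⊗ₖ (H' + Complex.I • K') =
      (1 : ℂ) • (H ⊗ₖ H') + Complex.I • (H ⊗ₖ K') + Complex.I • (K ⊗ₖ H')
        + (-1 : ℂ) • (K ⊗ₖ K') := by
    simp only [add_kronecker, kronecker_add, smul_kronecker, kronecker_smul]
    match_scalars <;> simp
  rw [expand]
  simp only [swapHermitianAverage_add]
  refine add_mem (add_mem (add_mem ?_ ?_) ?_) ?_ <;>
    exact swapHermitianAverage_smul_kronecker_mem _ ‹_› ‹_›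

lemma swapHermitianAverage_mem [Finite n] [DecidableEq n] (M : Matrix (n × n) (n × n) ℂ) :
    swapHermitianAverage M ∈ symmKroneckerSpan n := by
  induction M using Matrix.induction_on' with
  | h_zero => simp [swapHermitianAverage, zero_mem]
  | h_add M N hM hN => rw [swapHermitianAverage_add]; exact add_mem hM hN
  | h_std_basis p q x =>
    rw [← mul_one x, ← single_kronecker_single]
    exact swapHermitianAverage_kronecker_mem _ _

end

theorem swap_invariant_decomposition {d : ℕ}
    (G : Matrix (Fin d × Fin d) (Fin d × Fin d) ℂ) (hG : G.IsHermitian)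
    (hswap : swapM d * G * swapM d = G) :
    ∃ (m : ℕ) (A : Matrix (Fin d) (Fin d) ℂ)
      (B : Fin m → Matrix (Fin d) (Fin d) ℂ) (b : Fin m → ℝ),
        A.IsHermitian ∧ (∀ i, (B i).IsHermitian) ∧
        G = (1 : Matrix (Fin d) (Fin d) ℂ) ⊗ₖ A + A ⊗ₖ 1
              + ∑ i, ((b i : ℂ)) • (B i ⊗ₖ B i) := by
  have hG_mem : G ∈ symmKroneckerSpan (Fin d) := by
    rw [← swapHermitianAverage_eq_self hG (swapM_mul_mul_swapM G ▸ hswap)]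
    exact swapHermitianAverage_mem G
  obtain ⟨m, b, X, hX⟩ := Submodule.mem_span_set'.mp hG_mem
  choose B hB hBX using fun i => (X i).2
  refine ⟨m, 0, B, b, isHermitian_zero, hB, ?_⟩
  simp only [kronecker_zero, zero_kronecker, add_zero, zero_add, hBX, Complex.coe_smul, hX]
end
end

section
/- Let G = 1⊗A + A⊗1 + Σ_k b_k B_k⊗B_k with A, B_k real matrices and b_k ≤ 0, and suppose G has a non-degenerate ground state |ψ⟩. Write |ψ⟩ = Σ_k λ_k |a_k⟩⊗|a_k⟩ with λ_k real and {|a_k⟩} real orthonormal. Then ⟨ψ̃|G|ψ̃⟩ ≤ ⟨ψ|G|ψ⟩ where |ψ̃⟩ = Σ_k |λ_k| |a_k⟩⊗|a_k⟩; hence by uniqueness of the ground state all λ_k have the same sign. -/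
/-!
In the basis `a_k ⊗ a_k`, the energy of `Σ_k μ_k a_k ⊗ a_k` (with `μ` real) is the quadratic
form `Σ_{k,k'} μ_k μ_k' E_{kk'}`. For `k ≠ k'` the terms `1 ⊗ A` and `A ⊗ 1` drop out by
orthogonality, leaving `E_{kk'} = Σ_K b_K ⟨a_k|B_K|a_k'⟩² ≤ 0` because the matrix elements are
real and `b_K ≤ 0`. Replacing `λ` by `|λ|` keeps the norm and can only lower the energy, so `ψ̃`
is again a ground state; non-degeneracy gives `|λ_k| = c λ_k` for a single scalar `c`, which
forces all nonzero `λ_k` to have the same sign.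
-/

open Matrix Kronecker

section VecKron

variable {α n m : Type*} [CommSemiring α]

def vecKron (u : n → α) (v : m → α) : n × m → α := fun p => u p.1 * v p.2

lemma star_vecKron [StarRing α] (u : n → α) (v : m → α) :
    star (vecKron u v) = vecKron (star u) (star v) := by
  funext p
  simp [vecKron]

lemma vecKron_dotProduct_vecKron [Fintype n] [Fintype m] (u u' : n → α) (v v' : m → α) :
    vecKron u v ⬝ᵥ vecKron u' v' = (u ⬝ᵥ u') * (v ⬝ᵥ v') := by
  simp only [vecKron, dotProduct, Fintype.sum_prod_type, Finset.sum_mul_sum]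
  exact Finset.sum_congr rfl fun _ _ => Finset.sum_congr rfl fun _ _ => by ring

lemma kronecker_mulVec_vecKron {n' m' : Type*} [Fintype n] [Fintype m] (M : Matrix n' n α)
    (N : Matrix m' m α) (u : n → α) (v : m → α) :
    (M ⊗ₖ N) *ᵥ vecKron u v = vecKron (M *ᵥ u) (N *ᵥ v) := by
  funext p
  simp only [vecKron, mulVec, dotProduct, kroneckerMap_apply, Fintype.sum_prod_type,
    Finset.sum_mul_sum]
  exact Finset.sum_congr rfl fun _ _ => Finset.sum_congr rfl fun _ _ => by ring

lemma vecKron_self_orthonormal {ι : Type*} [DecidableEq ι] [StarRing α] [Fintype n]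
    (u : ι → n → α) (hu : ∀ k k', star (u k) ⬝ᵥ u k' = if k = k' then 1 else 0) (k k' : ι) :
    star (vecKron (u k) (u k)) ⬝ᵥ vecKron (u k') (u k') = if k = k' then 1 else 0 := by
  rw [star_vecKron, vecKron_dotProduct_vecKron, hu]
  split_ifs <;> simp

end VecKron

section RealCombination

variable {ι n : Type*} [Fintype ι] [Fintype n]

lemma re_star_sum_smul_dotProduct_mulVec_sum_smul (M : Matrix n n ℂ) (w : ι → n → ℂ)
    (μ : ι → ℝ) :
    (star (∑ k, μ k • w k) ⬝ᵥ M *ᵥ ∑ k, μ k • w k).re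
      = ∑ k, ∑ k', μ k * μ k' * (star (w k) ⬝ᵥ M *ᵥ w k').re := by
  simp only [star_sum, star_smul, star_trivial, sum_dotProduct, mulVec_sum, dotProduct_sum,
    mulVec_smul, smul_dotProduct, dotProduct_smul, Complex.re_sum, Complex.smul_re, smul_eq_mul,
    Finset.mul_sum]
  rw [Finset.sum_comm]
  exact Finset.sum_congr rfl fun _ _ => Finset.sum_congr rfl fun _ _ => by ring

variable [DecidableEq ι] {w : ι → n → ℂ}
    (hw : ∀ k k', star (w k) ⬝ᵥ w k' = if k = k' then 1 else 0)
include hw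

lemma star_dotProduct_sum_smul_of_orthonormal (μ : ι → ℝ) (k : ι) :
    star (w k) ⬝ᵥ ∑ j, μ j • w j = μ k := by
  simp [dotProduct_sum, dotProduct_smul, hw]

lemma star_sum_smul_dotProduct_sum_smul_of_orthonormal (μ : ι → ℝ) :
    star (∑ k, μ k • w k) ⬝ᵥ ∑ k, μ k • w k = ((∑ k, μ k ^ 2 : ℝ) : ℂ) := by
  simp [star_sum, star_smul, sum_dotProduct, smul_dotProduct,
    star_dotProduct_sum_smul_of_orthonormal hw, sq]

end RealCombination

lemma sum_abs_mul_abs_mul_le_of_offDiag_nonpos {ι : Type*} [Fintype ι] (E : ι → ι → ℝ)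
    (hE : ∀ k k', k ≠ k' → E k k' ≤ 0) (μ : ι → ℝ) :
    ∑ k, ∑ k', |μ k| * |μ k'| * E k k' ≤ ∑ k, ∑ k', μ k * μ k' * E k k' := by
  refine Finset.sum_le_sum fun k _ => Finset.sum_le_sum fun k' _ => ?_
  obtain rfl | hkk' := eq_or_ne k k'
  · rw [abs_mul_abs_self]
  · exact mul_le_mul_of_nonpos_right (abs_mul (μ k) (μ k') ▸ le_abs_self _) (hE k k' hkk')

lemma mul_nonneg_of_abs_eq_mul {ι : Type*} (l : ι → ℝ) (c : ℂ)
    (hc : ∀ k, ((|l k| : ℝ) : ℂ) = c * l k) (k k' : ι) : 0 ≤ l k * l k' := by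
  have hre : ∀ k, c.re * l k = |l k| := fun k => by
    simpa using (congrArg Complex.re (hc k)).symm
  obtain h0 | hpos := (sq_nonneg c.re).eq_or_lt
  · have hlk : |l k| = 0 := by rw [← hre, pow_eq_zero_iff two_ne_zero |>.1 h0.symm, zero_mul]
    simp [abs_eq_zero.1 hlk]
  · refine (mul_nonneg_iff_of_pos_left hpos).1 ?_
    calc 0 ≤ |l k| * |l k'| := by positivity
      _ = c.re ^ 2 * (l k * l k') := by rw [← hre, ← hre]; ring

lemma im_dotProduct_mulVec_eq_zero {n : Type*} [Fintype n] {u v : n → ℂ} {M : Matrix n n ℂ}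
    (hu : ∀ i, (u i).im = 0) (hM : ∀ i j, (M i j).im = 0) (hv : ∀ i, (v i).im = 0) :
    (u ⬝ᵥ M *ᵥ v).im = 0 := by
  simp [dotProduct, mulVec, Complex.im_sum, Complex.mul_im, hu, hM, hv]

lemma re_star_vecKron_dotProduct_mulVec_vecKron_nonpos {n κ : Type*} [Fintype n]
    [DecidableEq n] [Fintype κ] (A : Matrix n n ℂ) (B : κ → Matrix n n ℂ) (b : κ → ℝ)
    (hB : ∀ K i j, (B K i j).im = 0) (hb : ∀ K, b K ≤ 0) {u v : n → ℂ}
    (hu : ∀ i, (u i).im = 0) (hv : ∀ i, (v i).im = 0) (huv : star u ⬝ᵥ v = 0) :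
    (star (vecKron u u) ⬝ᵥ
      (1 ⊗ₖ A + A ⊗ₖ 1 + ∑ K, (b K : ℂ) • (B K ⊗ₖ B K)) *ᵥ vecKron v v).re ≤ 0 := by
  simp only [star_vecKron, add_mulVec, sum_mulVec, smul_mulVec, kronecker_mulVec_vecKron,
    dotProduct_add, dotProduct_sum, dotProduct_smul, vecKron_dotProduct_vecKron, one_mulVec, huv,
    zero_mul, mul_zero, zero_add, Complex.re_sum]
  refine Finset.sum_nonpos fun K _ => ?_
  have him : (star u ⬝ᵥ B K *ᵥ v).im = 0 :=
    im_dotProduct_mulVec_eq_zero (by simp [hu]) (hB K) hv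
  rw [smul_eq_mul, Complex.re_ofReal_mul, Complex.mul_re, him, mul_zero, sub_zero]
  exact mul_nonpos_of_nonpos_of_nonneg (hb K) (mul_self_nonneg _)

theorem ground_state_sign_structure_general {d m : ℕ}
    (A : Matrix (Fin d) (Fin d) ℂ) (B : Fin m → Matrix (Fin d) (Fin d) ℂ)
    (b : Fin m → ℝ)
    (hBreal : ∀ k i j, (B k i j).im = 0)
    (hb : ∀ k, b k ≤ 0)
    (G : Matrix (Fin d × Fin d) (Fin d × Fin d) ℂ)
    (hG : G = (1 : Matrix (Fin d) (Fin d) ℂ) ⊗ₖ A + A ⊗ₖ 1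
            + ∑ k, ((b k : ℂ)) • (B k ⊗ₖ B k))
    (ψ : Fin d × Fin d → ℂ) (hψunit : star ψ ⬝ᵥ ψ = 1)
    (hground : ∀ φ : Fin d × Fin d → ℂ, star φ ⬝ᵥ φ = 1 →
      (star ψ ⬝ᵥ G.mulVec ψ).re ≤ (star φ ⬝ᵥ G.mulVec φ).re)
    (hnondeg : ∀ φ : Fin d × Fin d → ℂ, star φ ⬝ᵥ φ = 1 →
      (star φ ⬝ᵥ G.mulVec φ).re = (star ψ ⬝ᵥ G.mulVec ψ).re → ∃ c : ℂ, φ = c • ψ)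
    (l : Fin d → ℝ) (a : Fin d → Fin d → ℝ)
    (hortho : ∀ k k', ∑ i, a k i * a k' i = if k = k' then 1 else 0)
    (hdecomp : ∀ p, ψ p = ∑ k, (l k : ℂ) * (a k p.1 : ℂ) * (a k p.2 : ℂ))
    (ψt : Fin d × Fin d → ℂ)
    (hψt : ∀ p, ψt p = ∑ k, ((|l k| : ℝ) : ℂ) * (a k p.1 : ℂ) * (a k p.2 : ℂ)) :
    (star ψt ⬝ᵥ G.mulVec ψt).re ≤ (star ψ ⬝ᵥ G.mulVec ψ).re ∧
      ∀ k k', 0 ≤ l k * l k' := by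
  set u : Fin d → Fin d → ℂ := fun k i => (a k i : ℂ)
  have hu : ∀ k k', star (u k) ⬝ᵥ u k' = if k = k' then 1 else 0 := fun k k' => by
    simpa [u, dotProduct, apply_ite (fun x : ℝ => (x : ℂ))] using
      congrArg (fun x : ℝ => (x : ℂ)) (hortho k k')
  set w : Fin d → Fin d × Fin d → ℂ := fun k => vecKron (u k) (u k)
  have hw : ∀ k k', star (w k) ⬝ᵥ w k' = if k = k' then 1 else 0 :=
    vecKron_self_orthonormal u hu
  have hcomb : ∀ (μ : Fin d → ℝ) (φ : Fin d × Fin d → ℂ),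
      (∀ p, φ p = ∑ k, (μ k : ℂ) * (a k p.1 : ℂ) * (a k p.2 : ℂ)) → φ = ∑ k, μ k • w k :=
    fun μ φ hφ => funext fun p => by simp [hφ, w, u, vecKron, Complex.real_smul, mul_assoc]
  rw [hcomb l ψ hdecomp] at hψunit hground hnondeg ⊢
  rw [hcomb (|l ·|) ψt hψt]
  have henergy : (star (∑ k, |l k| • w k) ⬝ᵥ G *ᵥ ∑ k, |l k| • w k).re
      ≤ (star (∑ k, l k • w k) ⬝ᵥ G *ᵥ ∑ k, l k • w k).re := by
    simp only [re_star_sum_smul_dotProduct_mulVec_sum_smul]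
    refine sum_abs_mul_abs_mul_le_of_offDiag_nonpos _ (fun k k' hkk' => ?_) l
    rw [hG]
    exact re_star_vecKron_dotProduct_mulVec_vecKron_nonpos A B b hBreal hb (by simp [u])
      (by simp [u]) (by simpa [hkk'] using hu k k')
  refine ⟨henergy, ?_⟩
  have hunit : star (∑ k, |l k| • w k) ⬝ᵥ ∑ k, |l k| • w k = 1 := by
    rw [← hψunit, star_sum_smul_dotProduct_sum_smul_of_orthonormal hw,
      star_sum_smul_dotProduct_sum_smul_of_orthonormal hw]
    simp only [sq_abs]
  obtain ⟨c, hc⟩ := hnondeg _ hunit (le_antisymm henergy (hground _ hunit))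
  refine mul_nonneg_of_abs_eq_mul l c fun k => ?_
  simpa [dotProduct_smul, star_dotProduct_sum_smul_of_orthonormal hw] using
    congrArg (star (w k) ⬝ᵥ ·) hc

theorem ground_state_sign_structure {d m : ℕ}
    (A : Matrix (Fin d) (Fin d) ℂ) (B : Fin m → Matrix (Fin d) (Fin d) ℂ)
    (b : Fin m → ℝ)
    (hA : ∀ i j, (A i j).im = 0) (hBreal : ∀ k i j, (B k i j).im = 0)
    (hb : ∀ k, b k ≤ 0)
    (G : Matrix (Fin d × Fin d) (Fin d × Fin d) ℂ)
    (hG : G = (1 : Matrix (Fin d) (Fin d) ℂ) ⊗ₖ A + A ⊗ₖ 1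
            + ∑ k, ((b k : ℂ)) • (B k ⊗ₖ B k))
    (hHerm : G.IsHermitian)
    (ψ : Fin d × Fin d → ℂ) (hψunit : star ψ ⬝ᵥ ψ = 1)
    (hground : ∀ φ : Fin d × Fin d → ℂ, star φ ⬝ᵥ φ = 1 →
      (star ψ ⬝ᵥ G.mulVec ψ).re ≤ (star φ ⬝ᵥ G.mulVec φ).re)
    (hnondeg : ∀ φ : Fin d × Fin d → ℂ, star φ ⬝ᵥ φ = 1 →
      (star φ ⬝ᵥ G.mulVec φ).re = (star ψ ⬝ᵥ G.mulVec ψ).re → ∃ c : ℂ, φ = c • ψ)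
    (l : Fin d → ℝ) (a : Fin d → Fin d → ℝ)
    (hortho : ∀ k k', ∑ i, a k i * a k' i = if k = k' then 1 else 0)
    (hdecomp : ∀ p, ψ p = ∑ k, (l k : ℂ) * (a k p.1 : ℂ) * (a k p.2 : ℂ))
    (ψt : Fin d × Fin d → ℂ)
    (hψt : ∀ p, ψt p = ∑ k, ((|l k| : ℝ) : ℂ) * (a k p.1 : ℂ) * (a k p.2 : ℂ)) :
    (star ψt ⬝ᵥ G.mulVec ψt).re ≤ (star ψ ⬝ᵥ G.mulVec ψ).re ∧
      ∀ k k', 0 ≤ l k * l k' :=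
  ground_state_sign_structure_general A B b hBreal hb G hG ψ hψunit hground hnondeg l a hortho
    hdecomp ψt hψt
end

section
/- The n×n matrix d with entries d_{ij} = 1/(ζ(i)+ζ(j)), where ζ(i) = c − i for a constant c > n (so that all ζ(i)+ζ(j) > 0), is positive definite. -/
/-!
With `a i = ζ i - 1/2`, the entry `1 / (ζ i + ζ j) = ∫₀¹ t ^ a i * t ^ a j dt` makes the Cauchy matrix
the Gram matrix of the functions `t ^ a i` in `L²(0, 1)`, so its quadratic form is
`∫₀¹ (∑ i, x i * t ^ a i) ^ 2 dt ≥ 0`. When `ζ i = b + k i` with distinct natural numbers `k i`,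
the integrand is a power of `t` times the square of the polynomial `∑ i, x i X ^ k i`, which is
nonzero as soon as `x ≠ 0`; it then vanishes only at finitely many points of `(0, 1]`, and the
integral is positive. Here `ζ i = (c - n) + (n - 1 - i)`.
-/

open Matrix MeasureTheory Set Function Polynomial

noncomputable section

def cauchyMatrix {ι : Type*} (ζ : ι → ℝ) : Matrix ι ι ℝ :=
  of fun i j => 1 / (ζ i + ζ j)

theorem isHermitian_cauchyMatrix {ι : Type*} (ζ : ι → ℝ) : (cauchyMatrix ζ).IsHermitian := by
  ext i j
  simp [cauchyMatrix, add_comm]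

section PowerFunctions

variable {r s : ℝ}

theorem eqOn_rpow_add_rpow_mul_rpow :
    EqOn (fun t : ℝ => t ^ (r + s)) (fun t => t ^ r * t ^ s) (Ioc 0 1) :=
  fun _ ht => Real.rpow_add ht.1 r s

theorem integrableOn_rpow_mul_rpow (h : -1 < r + s) :
    IntegrableOn (fun t : ℝ => t ^ r * t ^ s) (Ioc 0 1) :=
  (intervalIntegral.intervalIntegrable_rpow' h).1.congr_fun eqOn_rpow_add_rpow_mul_rpow
    measurableSet_Ioc

theorem integral_rpow_mul_rpow (h : -1 < r + s) :
    ∫ t in Ioc (0 : ℝ) 1, t ^ r * t ^ s = 1 / (r + s + 1) := by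
  rw [← setIntegral_congr_fun measurableSet_Ioc eqOn_rpow_add_rpow_mul_rpow,
    ← intervalIntegral.integral_of_le zero_le_one, integral_rpow (Or.inl h),
    Real.one_rpow, Real.zero_rpow (by linarith)]
  ring

end PowerFunctions

section Gram

variable {ι : Type*} [Fintype ι] {a : ι → ℝ}

theorem sum_mul_rpow_sq (x : ι → ℝ) (t : ℝ) :
    (∑ i, x i * t ^ a i) ^ 2 = ∑ i, ∑ j, x i * x j * (t ^ a i * t ^ a j) := by
  rw [sq, Finset.sum_mul_sum]
  refine Finset.sum_congr rfl fun i _ => Finset.sum_congr rfl fun j _ => ?_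
  ring

theorem integrableOn_sum_mul_rpow_sq (ha : ∀ i j, -1 < a i + a j) (x : ι → ℝ) :
    IntegrableOn (fun t : ℝ => (∑ i, x i * t ^ a i) ^ 2) (Ioc 0 1) := by
  simp_rw [sum_mul_rpow_sq]
  exact integrable_finsetSum _ fun i _ => integrable_finsetSum _ fun j _ =>
    (integrableOn_rpow_mul_rpow (ha i j)).const_mul _

theorem dotProduct_cauchyMatrix_mulVec {ζ : ι → ℝ} (hζ : ∀ i, 0 < ζ i) (x : ι → ℝ) :
    x ⬝ᵥ cauchyMatrix ζ *ᵥ x = ∫ t in Ioc (0 : ℝ) 1, (∑ i, x i * t ^ (ζ i - 1 / 2)) ^ 2 := by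
  have hexp : ∀ i j, -1 < (ζ i - 1 / 2) + (ζ j - 1 / 2) := fun i j => by
    linarith [hζ i, hζ j]
  simp_rw [sum_mul_rpow_sq]
  rw [integral_finsetSum _ fun i _ => integrable_finsetSum _ fun j _ =>
    (integrableOn_rpow_mul_rpow (hexp i j)).const_mul _]
  simp only [dotProduct, mulVec, cauchyMatrix, of_apply, Finset.mul_sum]
  refine Finset.sum_congr rfl fun i _ => ?_
  rw [integral_finsetSum _ fun j _ => (integrableOn_rpow_mul_rpow (hexp i j)).const_mul _]
  refine Finset.sum_congr rfl fun j _ => ?_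
  rw [integral_const_mul, integral_rpow_mul_rpow (hexp i j)]
  ring_nf

end Gram

section NatExponents

variable {ι : Type*} [Fintype ι] {k : ι → ℕ} {x : ι → ℝ}

theorem sum_monomial_ne_zero (hk : Injective k) (hx : x ≠ 0) :
    ∑ i, monomial (k i) (x i) ≠ 0 := by
  obtain ⟨i₀, hi₀⟩ := Function.ne_iff.mp hx
  intro h
  have hcoeff : (∑ i, monomial (k i) (x i)).coeff (k i₀) = x i₀ := by
    rw [finsetSum_coeff, Finset.sum_eq_single i₀ (fun i _ hi => by
      rw [coeff_monomial, if_neg (hk.ne hi)]) (by simp)]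
    simp
  exact hi₀ (by rw [← hcoeff, h, coeff_zero, Pi.zero_apply])

theorem sum_mul_rpow_add_natCast {t : ℝ} (ht : 0 < t) (b : ℝ) :
    ∑ i, x i * t ^ (b + k i) = t ^ b * (∑ i, monomial (k i) (x i)).eval t := by
  simp only [eval_finsetSum, eval_monomial, Finset.mul_sum, Real.rpow_add ht, Real.rpow_natCast]
  exact Finset.sum_congr rfl fun i _ => by ring

theorem volume_support_sum_mul_rpow_sq_pos (hk : Injective k) (hx : x ≠ 0) (b : ℝ) :
    0 < volume (support (fun t : ℝ => (∑ i, x i * t ^ (b + k i)) ^ 2) ∩ Ioc 0 1) := by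
  set P := ∑ i, monomial (k i) (x i)
  have hroots : volume {t : ℝ | P.IsRoot t} = 0 :=
    (finite_setOfPred_isRoot (sum_monomial_ne_zero hk hx)).measure_zero _
  have hsub : Ioc 0 1 \ {t : ℝ | P.IsRoot t} ⊆
      support (fun t : ℝ => (∑ i, x i * t ^ (b + k i)) ^ 2) ∩ Ioc 0 1 := by
    rintro t ⟨ht, hroot⟩
    refine ⟨?_, ht⟩
    rw [mem_support, sum_mul_rpow_add_natCast ht.1]
    exact pow_ne_zero 2 (mul_ne_zero (Real.rpow_pos_of_pos ht.1 b).ne' hroot)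
  calc (0 : ENNReal) < volume (Ioc (0 : ℝ) 1 \ {t | P.IsRoot t}) := by
        rw [measure_sdiff_null hroots, Real.volume_Ioc]
        norm_num
    _ ≤ _ := measure_mono hsub

theorem posDef_cauchyMatrix_add_natCast {b : ℝ} (hb : 0 < b) (hk : Injective k) :
    (cauchyMatrix fun i => b + k i).PosDef := by
  refine posDef_iff_dotProduct_mulVec.mpr ⟨isHermitian_cauchyMatrix _, fun x hx => ?_⟩
  have hpos : ∀ i, 0 < b + k i := fun i => by positivity
  rw [star_trivial, dotProduct_cauchyMatrix_mulVec hpos,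
    setIntegral_pos_iff_support_of_nonneg_ae
      (Filter.Eventually.of_forall fun _ => sq_nonneg _)
      (integrableOn_sum_mul_rpow_sq (fun i j => by linarith [hpos i, hpos j]) x)]
  simp_rw [add_sub_right_comm b]
  exact volume_support_sum_mul_rpow_sq_pos hk hx _

end NatExponents

theorem cauchy_matrix_posdef {n : ℕ} (c : ℝ) (hc : (n : ℝ) < c) :
    (Matrix.of fun i j : Fin n =>
      1 / ((c - ((i : ℕ) + 1)) + (c - ((j : ℕ) + 1)))).PosDef := by
  have hζ : (fun i : Fin n => c - ((i : ℕ) + 1)) = fun i => (c - n) + (i.rev : ℕ) := by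
    ext i
    rw [Fin.val_rev, Nat.cast_sub i.isLt]
    push_cast
    ring
  have hrev : Injective fun i : Fin n => (i.rev : ℕ) := Fin.val_injective.comp Fin.rev_injective
  have hposdef := posDef_cauchyMatrix_add_natCast (sub_pos.mpr hc) hrev
  rw [← hζ] at hposdef
  exact hposdef
end
end

section
/- For distinct positive reals ζ(1),...,ζ(n) and any x ∈ ℂ^n, one has Σ_{i,j} x̄_i x_j / (ζ(i)+ζ(j)) = ∫₀¹ t^{-1} |Σ_i x_i t^{ζ(i)}|² dt ≥ 0, with equality if and only if x = 0. -/
open MeasureTheory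

noncomputable section

/-! Since `1 / (a + b) = ∫₀¹ t ^ (a + b - 1) dt`, expanding `|∑ i, x i * t ^ ζ i|² / t` term by term
turns the integral into the quadratic form, which is therefore nonnegative. If it vanishes, the
Müntz polynomial `∑ i, x i * t ^ ζ i` vanishes a.e. on `(0, 1)`, hence by continuity on `[0, 1]`;
the maps `t ↦ t ^ ζ i` are distinct characters of the multiplicative monoid `[0, 1]`, so Dedekind's
independence of characters forces `x = 0`. -/

open Set ComplexConjugate

lemma integrableOn_rpow_sub_one_Ioo {a : ℝ} (ha : 0 < a) :
    IntegrableOn (fun t : ℝ => t ^ (a - 1)) (Ioo 0 1) :=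
  (intervalIntegral.integrableOn_Ioo_rpow_iff zero_lt_one).2 (by linarith)

lemma integral_rpow_sub_one_Ioo {a : ℝ} (ha : 0 < a) :
    ∫ t in Ioo (0 : ℝ) 1, t ^ (a - 1) = a⁻¹ := by
  rw [← integral_Ioc_eq_integral_Ioo, ← intervalIntegral.integral_of_le zero_le_one,
    integral_rpow (Or.inl (by linarith)), sub_add_cancel, Real.one_rpow,
    Real.zero_rpow ha.ne', sub_zero, one_div]

lemma integrableOn_const_mul_rpow_sub_one_Ioo (c : ℂ) {a : ℝ} (ha : 0 < a) :
    IntegrableOn (fun t : ℝ => c * ((t ^ (a - 1) : ℝ) : ℂ)) (Ioo 0 1) :=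
  (integrableOn_rpow_sub_one_Ioo ha).ofReal.const_mul c

lemma linearIndependent_rpow_unitInterval {ι : Type*} {ζ : ι → ℝ}
    (hζ : Function.Injective ζ) :
    LinearIndependent ℂ (fun i (t : unitInterval) => (((t : ℝ) ^ ζ i : ℝ) : ℂ)) := by
  let character (r : ℝ) : unitInterval →* ℂ :=
    { toFun := fun t => (((t : ℝ) ^ r : ℝ) : ℂ)
      map_one' := by simp
      map_mul' := fun s t => by
        rw [Set.Icc.coe_mul, Real.mul_rpow s.2.1 t.2.1, Complex.ofReal_mul] }
  have half_mem : (2⁻¹ : ℝ) ∈ unitInterval := ⟨by norm_num, by norm_num⟩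
  have character_injective : Function.Injective character := fun r s h => by
    have := DFunLike.congr_fun h ⟨2⁻¹, half_mem⟩
    simp only [character, MonoidHom.coe_mk, OneHom.coe_mk, Complex.ofReal_inj] at this
    exact (Real.rpow_right_inj (by norm_num) (by norm_num)).1 this
  have := (linearIndependent_monoidHom unitInterval ℂ).comp _ (character_injective.comp hζ)
  exact this

variable {ι : Type*} [Fintype ι] (ζ : ι → ℝ) (x : ι → ℂ)

def muntzPoly (t : ℝ) : ℂ := ∑ i, x i * ((t ^ ζ i : ℝ) : ℂ)

lemma continuous_muntzPoly (hζ : ∀ i, 0 ≤ ζ i) : Continuous (muntzPoly ζ x) :=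
  continuous_finsetSum _ fun i _ => continuous_const.mul <|
    Complex.continuous_ofReal.comp (continuous_id.rpow_const fun _ => Or.inr (hζ i))

lemma ofReal_sq_norm_muntzPoly_div {t : ℝ} (ht : 0 < t) :
    ((‖muntzPoly ζ x t‖ ^ 2 / t : ℝ) : ℂ) =
      ∑ i, ∑ j, conj (x i) * x j * ((t ^ (ζ i + ζ j - 1) : ℝ) : ℂ) := by
  rw [Complex.ofReal_div, Complex.sq_norm, Complex.normSq_eq_conj_mul_self, muntzPoly, map_sum,
    Finset.sum_mul_sum, Finset.sum_div]
  refine Finset.sum_congr rfl fun i _ => ?_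
  rw [Finset.sum_div]
  refine Finset.sum_congr rfl fun j _ => ?_
  rw [Real.rpow_sub ht, Real.rpow_add ht, Real.rpow_one, map_mul, Complex.conj_ofReal]
  push_cast
  ring

variable {ζ}

lemma integrableOn_sq_norm_muntzPoly_div (hζ : ∀ i, 0 < ζ i) :
    IntegrableOn (fun t => ‖muntzPoly ζ x t‖ ^ 2 / t) (Ioo 0 1) := by
  have gram_integrable : IntegrableOn
      (fun t : ℝ => ∑ i, ∑ j, conj (x i) * x j * ((t ^ (ζ i + ζ j - 1) : ℝ) : ℂ)) (Ioo 0 1) :=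
    integrable_finsetSum _ fun i _ =>
      integrable_finsetSum _ fun j _ =>
        integrableOn_const_mul_rpow_sub_one_Ioo _ (add_pos (hζ i) (hζ j))
  refine IntegrableOn.congr_fun gram_integrable.re (fun t ht => ?_) measurableSet_Ioo
  simp only [← ofReal_sq_norm_muntzPoly_div ζ x ht.1, RCLike.re_to_complex, Complex.ofReal_re]

lemma ofReal_integral_sq_norm_muntzPoly_div (hζ : ∀ i, 0 < ζ i) :
    ((∫ t in Ioo (0 : ℝ) 1, ‖muntzPoly ζ x t‖ ^ 2 / t : ℝ) : ℂ) =
      ∑ i, ∑ j, conj (x i) * x j / ((ζ i + ζ j : ℝ) : ℂ) := by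
  rw [← integral_complex_ofReal,
    setIntegral_congr_fun measurableSet_Ioo fun t ht => ofReal_sq_norm_muntzPoly_div ζ x ht.1,
    integral_finsetSum _ fun i _ =>
      integrable_finsetSum _ fun j _ =>
        integrableOn_const_mul_rpow_sub_one_Ioo _ (add_pos (hζ i) (hζ j))]
  refine Finset.sum_congr rfl fun i _ => ?_
  rw [integral_finsetSum _ fun j _ =>
    integrableOn_const_mul_rpow_sub_one_Ioo _ (add_pos (hζ i) (hζ j))]
  refine Finset.sum_congr rfl fun j _ => ?_
  rw [integral_const_mul, integral_complex_ofReal,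
    integral_rpow_sub_one_Ioo (add_pos (hζ i) (hζ j)), Complex.ofReal_inv, div_eq_mul_inv]

lemma eq_zero_of_integral_sq_norm_muntzPoly_div_eq_zero (hζ : ∀ i, 0 < ζ i)
    (hinj : Function.Injective ζ)
    (h : ∫ t in Ioo (0 : ℝ) 1, ‖muntzPoly ζ x t‖ ^ 2 / t = 0) : x = 0 := by
  have integrand_ae_zero :
      (fun t => ‖muntzPoly ζ x t‖ ^ 2 / t) =ᵐ[volume.restrict (Ioo 0 1)] 0 :=
    (integral_eq_zero_iff_of_nonneg_ae
      (ae_restrict_of_forall_mem measurableSet_Ioo fun t ht => div_nonneg (sq_nonneg _) ht.1.le)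
      (integrableOn_sq_norm_muntzPoly_div x hζ)).1 h
  have ae_zero : muntzPoly ζ x =ᵐ[volume.restrict (Icc 0 1)] 0 := by
    rw [← Measure.restrict_congr_set Ioo_ae_eq_Icc]
    filter_upwards [integrand_ae_zero, ae_restrict_mem measurableSet_Ioo] with t ht ht'
    simpa [ht'.1.ne'] using ht
  have eqOn_zero : EqOn (muntzPoly ζ x) 0 (Icc 0 1) :=
    Measure.eqOn_of_ae_eq ae_zero (continuous_muntzPoly ζ x fun i => (hζ i).le).continuousOn
      continuousOn_const (by simp [closure_Ioo])
  exact funext <| Fintype.linearIndependent_iff.1 (linearIndependent_rpow_unitInterval hinj) x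
    (funext fun t => by simpa [muntzPoly] using eqOn_zero t.2)

theorem cauchy_quadratic_form_integral {n : ℕ} (ζ : Fin n → ℝ)
    (hpos : ∀ i, 0 < ζ i) (hinj : Function.Injective ζ)
    (x : Fin n → ℂ) :
    (∑ i, ∑ j, (starRingEnd ℂ) (x i) * x j / (((ζ i + ζ j : ℝ)) : ℂ))
        = (((∫ t in Set.Ioo (0:ℝ) 1,
            (‖∑ i, x i * ((t ^ (ζ i) : ℝ) : ℂ)‖) ^ 2 / t) : ℝ) : ℂ) ∧
      0 ≤ ∫ t in Set.Ioo (0:ℝ) 1,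
            (‖∑ i, x i * ((t ^ (ζ i) : ℝ) : ℂ)‖) ^ 2 / t ∧
      ((∑ i, ∑ j, (starRingEnd ℂ) (x i) * x j / (((ζ i + ζ j : ℝ)) : ℂ)) = 0
        ↔ x = 0) := by
  have integral_eq := ofReal_integral_sq_norm_muntzPoly_div x hpos
  refine ⟨integral_eq.symm, ?_, fun h => ?_, fun h => by simp [h]⟩
  · exact setIntegral_nonneg measurableSet_Ioo fun t ht => div_nonneg (sq_nonneg _) ht.1.le
  · refine eq_zero_of_integral_sq_norm_muntzPoly_div_eq_zero x hpos hinj ?_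
    exact_mod_cast integral_eq.trans h
end
end

section
/- Let f(x) = −log(1−x) applied entrywise. For real symmetric matrices A, B with entries in (−1,1), if 0 ≤ A ≤ B (in the positive semidefinite order) then f[A] ≤ f[B], where f[M] denotes the entrywise application of f. -/
/-!
Expand `-log (1 - x) = ∑ xᵏ / k`. By the Schur product theorem, from `Bᵏ⁺¹ - Aᵏ⁺¹ =
(Bᵏ - Aᵏ) ⊙ B + Aᵏ ⊙ (B - A)` every Hadamard power difference `B^∘k - A^∘k` is positive
semidefinite, hence so is the series of these with nonnegative coefficients, the positive
semidefinite cone being closed.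
-/

open Matrix
open scoped ComplexOrder

namespace Matrix

variable {ι 𝕜 : Type*} [Fintype ι] [RCLike 𝕜]

theorem PosSemidef.of_hasSum {α : Type*} {F : α → Matrix ι ι 𝕜} {S : Matrix ι ι 𝕜}
    (hF : ∀ k, (F k).PosSemidef) (hS : HasSum F S) : S.PosSemidef := by
  refine .of_dotProduct_mulVec_nonneg ?_ fun x => ?_
  · have : HasSum F Sᴴ := by
      simpa only [(hF _).isHermitian.eq] using hS.matrix_conjTranspose
    exact this.unique hS
  · let q : Matrix ι ι 𝕜 →+ 𝕜 :=
      { toFun := fun M => star x ⬝ᵥ M *ᵥ x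
        map_zero' := by simp
        map_add' := by simp [add_mulVec, dotProduct_add] }
    have hq : Continuous q :=
      continuous_const.dotProduct (continuous_id.matrix_mulVec continuous_const)
    exact (hS.map q hq).nonneg fun k => (hF k).dotProduct_mulVec_nonneg x

theorem PosSemidef.map_pow {A : Matrix ι ι 𝕜} (hA : A.PosSemidef) (k : ℕ) :
    (A.map (· ^ k)).PosSemidef := by
  induction k with
  | zero =>
    have : A.map (· ^ 0) = vecMulVec 1 (star (1 : ι → 𝕜)) := by ext; simp [vecMulVec]
    exact this ▸ posSemidef_vecMulVec_self_star 1
  | succ k ih =>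
    have : A.map (· ^ (k + 1)) = A.map (· ^ k) ⊙ A := by ext; simp [pow_succ]
    exact this ▸ ih.hadamard hA

theorem PosSemidef.map_pow_sub_map_pow {A B : Matrix ι ι 𝕜} (hA : A.PosSemidef)
    (hAB : (B - A).PosSemidef) (k : ℕ) : (B.map (· ^ k) - A.map (· ^ k)).PosSemidef := by
  have hB : B.PosSemidef := by simpa using hAB.add hA
  induction k with
  | zero => convert PosSemidef.zero; ext; simp
  | succ k ih =>
    have : B.map (· ^ (k + 1)) - A.map (· ^ (k + 1)) =
        (B.map (· ^ k) - A.map (· ^ k)) ⊙ B + A.map (· ^ k) ⊙ (B - A) := by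
      ext; simp only [pow_succ, sub_apply, map_apply, add_apply, hadamard_apply]; ring
    exact this ▸ (ih.hadamard hB).add ((hA.map_pow k).hadamard hAB)

theorem PosSemidef.map_sub_map_of_hasSum_pow {c : ℕ → ℝ} (hc : ∀ k, 0 ≤ c k) {f : 𝕜 → 𝕜}
    {s : Set 𝕜} (hf : ∀ x ∈ s, HasSum (fun k => c k • x ^ k) (f x)) {A B : Matrix ι ι 𝕜}
    (hAs : ∀ i j, A i j ∈ s) (hBs : ∀ i j, B i j ∈ s) (hA : A.PosSemidef)
    (hAB : (B - A).PosSemidef) : (B.map f - A.map f).PosSemidef := by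
  refine PosSemidef.of_hasSum (fun k => (hA.map_pow_sub_map_pow hAB k).smul (hc k)) ?_
  refine Pi.hasSum.2 fun i => Pi.hasSum.2 fun j => ?_
  simpa [smul_sub] using (hf _ (hBs i j)).sub (hf _ (hAs i j))

end Matrix

-- The `k = 0` term is `x ^ 0 / 0 = 0`.
theorem Real.hasSum_pow_div_neg_log_one_sub {x : ℝ} (hx : x ∈ Set.Ioo (-1) 1) :
    HasSum (fun k : ℕ => x ^ k / k) (-Real.log (1 - x)) := by
  have := Real.hasSum_pow_div_log_of_abs_lt_one (abs_lt.2 hx)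
  rw [← hasSum_nat_add_iff' 1]
  simpa using this

theorem entrywise_log_schur_monotone_general {n : ℕ}
    (A B : Matrix (Fin n) (Fin n) ℝ)
    (hAent : ∀ i j, A i j ∈ Set.Ioo (-1 : ℝ) 1)
    (hBent : ∀ i j, B i j ∈ Set.Ioo (-1 : ℝ) 1)
    (hA : A.PosSemidef) (hBA : (B - A).PosSemidef) :
    ((Matrix.of fun i j => -Real.log (1 - B i j))
      - (Matrix.of fun i j => -Real.log (1 - A i j))).PosSemidef :=
  PosSemidef.map_sub_map_of_hasSum_pow (c := fun k => (k : ℝ)⁻¹)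
    (f := fun x => -Real.log (1 - x)) (fun k => by positivity)
    (fun x hx => by simpa [div_eq_inv_mul] using Real.hasSum_pow_div_neg_log_one_sub hx)
    hAent hBent hA hBA

theorem entrywise_log_schur_monotone {n : ℕ}
    (A B : Matrix (Fin n) (Fin n) ℝ)
    (hAsym : A.IsSymm) (hBsym : B.IsSymm)
    (hAent : ∀ i j, A i j ∈ Set.Ioo (-1 : ℝ) 1)
    (hBent : ∀ i j, B i j ∈ Set.Ioo (-1 : ℝ) 1)
    (hA : A.PosSemidef) (hBA : (B - A).PosSemidef) :
    ((Matrix.of fun i j => -Real.log (1 - B i j))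
      - (Matrix.of fun i j => -Real.log (1 - A i j))).PosSemidef :=
  entrywise_log_schur_monotone_general A B hAent hBent hA hBA
end

section
/- Let d be the n×n matrix with entries d_{ij} = 1/(ζ(i)+ζ(j)) with ζ(i) = (N+1)/2 − i for N > 2n (so all entries are in (0,1) when suitably scaled). Then there exists τ > 0 such that log[d] + τE is positive semidefinite, where log[·] is applied entrywise and E is the all-ones matrix. -/
/-!
The entries are `-log (c + k_i + k_j)` with `c = N + 1 - 2n > 0` and `k_i = n - 1 - i`. For `x ≠ 0` with `∑ x = 0`, the function `φ r = ∑ x_i x_j log (r + c + k_i + k_j)` tends to `0`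
as `r → ∞` (the `log r` parts cancel), and its derivative
`∑ x_i x_j / (r + c + k_i + k_j) = ∫₀¹ t^(r+c-1) (∑ x_i t^(k_i))² dt` is positive because a nonzero
polynomial has finitely many roots. Hence `φ 0 < 0`: the matrix is strictly positive on the
hyperplane `∑ x = 0`, and compactness of the unit sphere then shows that adding a large multiple of
the all-ones matrix makes it positive definite.
-/

open Matrix Filter Topology Function MeasureTheory intervalIntegral Interval

section
variable {ι : Type*} [Fintype ι]

theorem finite_setOf_sum_mul_pow_eq_zero {k : ι → ℕ} (hk : Injective k) {x : ι → ℝ}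
    (hx : x ≠ 0) : {t : ℝ | ∑ i, x i * t ^ k i = 0}.Finite := by
  classical
  set p : Polynomial ℝ := ∑ i, Polynomial.C (x i) * Polynomial.X ^ k i
  have hcoeff (i : ι) : p.coeff (k i) = x i := by
    simp only [p, Polynomial.finsetSum_coeff, Polynomial.coeff_C_mul_X_pow, hk.eq_iff,
      Finset.sum_ite_eq, Finset.mem_univ, if_true]
  obtain ⟨i, hi⟩ := Function.ne_iff.mp hx
  have hp : p ≠ 0 := fun h => hi (by simpa [h] using (hcoeff i).symm)
  simpa [p, Polynomial.eval_finsetSum] using Polynomial.finite_setOfPred_isRoot hp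

theorem sum_mul_div_add_add_eq_integral (k : ι → ℕ) (x : ι → ℝ) {a : ℝ} (ha : 0 < a) :
    ∑ i, ∑ j, x i * x j / (a + k i + k j) =
      ∫ t in (0 : ℝ)..1, t ^ (a - 1) * (∑ i, x i * t ^ k i) ^ 2 := by
  have hexp (i j : ι) : -1 < a - 1 + k i + k j := by
    linarith [(k i).cast_nonneg (α := ℝ), (k j).cast_nonneg (α := ℝ)]
  have hint (i j : ι) :
      IntervalIntegrable (fun t : ℝ => x i * x j * t ^ (a - 1 + k i + k j)) volume 0 1 :=
    (intervalIntegrable_rpow' (hexp i j)).const_mul _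
  have hexpand : ∀ᵐ t ∂volume, t ∈ Ι (0 : ℝ) 1 →
      t ^ (a - 1) * (∑ i, x i * t ^ k i) ^ 2 =
        ∑ i, ∑ j, x i * x j * t ^ (a - 1 + k i + k j) := by
    refine ae_of_all _ fun t ht => ?_
    have ht0 : 0 < t := by simpa using ht.1
    rw [sq, Finset.sum_mul_sum, Finset.mul_sum]
    refine Finset.sum_congr rfl fun i _ => ?_
    rw [Finset.mul_sum]
    refine Finset.sum_congr rfl fun j _ => ?_
    rw [Real.rpow_add ht0, Real.rpow_add ht0, Real.rpow_natCast, Real.rpow_natCast]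
    ring
  rw [intervalIntegral.integral_congr_ae hexpand, integral_finsetSum fun i _ => by
    simpa only [Finset.sum_fn] using IntervalIntegrable.sum _ fun j _ => hint i j]
  refine Finset.sum_congr rfl fun i _ => ?_
  rw [integral_finsetSum fun j _ => hint i j]
  refine Finset.sum_congr rfl fun j _ => ?_
  rw [intervalIntegral.integral_const_mul, integral_rpow (.inl (hexp i j))]
  have : a - 1 + k i + k j + 1 = a + k i + k j := by ring
  rw [this, Real.one_rpow, Real.zero_rpow (by positivity), sub_zero, mul_one_div]

theorem sum_mul_div_add_add_pos {k : ι → ℕ} (hk : Injective k) {x : ι → ℝ} (hx : x ≠ 0)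
    {a : ℝ} (ha : 0 < a) : 0 < ∑ i, ∑ j, x i * x j / (a + k i + k j) := by
  rw [sum_mul_div_add_add_eq_integral k x ha]
  set f : ℝ → ℝ := fun t => t ^ (a - 1) * (∑ i, x i * t ^ k i) ^ 2
  have hf_nonneg : 0 ≤ᵐ[volume.restrict (Ι 0 1)] f :=
    ae_restrict_of_forall_mem measurableSet_uIoc fun t ht =>
      mul_nonneg (Real.rpow_nonneg (by simpa using ht.1.le) _) (sq_nonneg _)
  have hf_int : IntervalIntegrable f volume 0 1 :=
    (intervalIntegrable_rpow' (by linarith)).mul_continuousOn (by fun_prop)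
  have hsupport : Set.Ioo 0 1 \ {t : ℝ | ∑ i, x i * t ^ k i = 0} ⊆ support f ∩ Set.Ioc 0 1 :=
    fun t ⟨ht, hF⟩ => ⟨mul_ne_zero (Real.rpow_pos_of_pos ht.1 _).ne' (pow_ne_zero 2 hF),
      Set.Ioo_subset_Ioc_self ht⟩
  rw [integral_pos_iff_support_of_nonneg_ae' hf_nonneg hf_int]
  refine ⟨zero_lt_one, ?_⟩
  calc (0 : ENNReal) < volume (Set.Ioo (0 : ℝ) 1) := by simp
    _ = volume (Set.Ioo 0 1 \ {t : ℝ | ∑ i, x i * t ^ k i = 0}) :=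
      (measure_sdiff_null ((finite_setOf_sum_mul_pow_eq_zero hk hx).measure_zero _)).symm
    _ ≤ volume (support f ∩ Set.Ioc 0 1) := measure_mono hsupport

theorem tendsto_sum_mul_log_add_atTop (s : ι → ι → ℝ) {x : ι → ℝ} (hsum : ∑ i, x i = 0) :
    Tendsto (fun r => ∑ i, ∑ j, x i * x j * Real.log (r + s i j)) atTop (𝓝 0) := by
  have hsub (r : ℝ) : ∑ i, ∑ j, x i * x j * Real.log (r + s i j) =
      ∑ i, ∑ j, x i * x j * (Real.log (r + s i j) - Real.log r) := by
    simp [mul_sub, Finset.sum_sub_distrib, ← Finset.sum_mul, ← Finset.mul_sum, hsum]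
  simp_rw [hsub]
  simpa using tendsto_finsetSum _ fun i _ => tendsto_finsetSum _ fun j _ =>
    (Real.tendsto_log_comp_add_sub_log (s i j)).const_mul (x i * x j)

theorem sum_mul_log_add_add_neg {k : ι → ℕ} (hk : Injective k) {x : ι → ℝ} (hx : x ≠ 0)
    (hsum : ∑ i, x i = 0) {c : ℝ} (hc : 0 < c) :
    ∑ i, ∑ j, x i * x j * Real.log (c + k i + k j) < 0 := by
  set φ : ℝ → ℝ := fun r => ∑ i, ∑ j, x i * x j * Real.log (r + (c + k i + k j))
  have hderiv (r : ℝ) (hr : 0 ≤ r) :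
      HasDerivAt φ (∑ i, ∑ j, x i * x j / (r + c + k i + k j)) r := by
    refine HasDerivAt.fun_sum fun i _ => HasDerivAt.fun_sum fun j _ => ?_
    have hpos : 0 < r + (c + k i + k j) := by positivity
    exact ((((hasDerivAt_id' r).add_const _).log hpos.ne').const_mul (x i * x j)).congr_deriv
      (by ring)
  have hmono : StrictMonoOn φ (Set.Ici 0) :=
    strictMonoOn_of_deriv_pos (convex_Ici 0)
      (fun r hr => (hderiv r hr).continuousAt.continuousWithinAt) fun r hr => by
        rw [interior_Ici] at hr
        rw [(hderiv r hr.le).deriv]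
        exact sum_mul_div_add_add_pos hk hx (by linarith [hr.out])
  have hφ_one : φ 1 ≤ 0 :=
    ge_of_tendsto (tendsto_sum_mul_log_add_atTop (fun i j => c + k i + k j) hsum)
      ((eventually_ge_atTop 1).mono fun r hr =>
        hmono.monotoneOn (by norm_num) (zero_le_one.trans hr) hr)
  have h01 : φ 0 < φ 1 := hmono Set.self_mem_Ici (by norm_num) one_pos
  simpa only [φ, zero_add] using h01.trans_le hφ_one

theorem dotProduct_add_smul_ones_mulVec (A : Matrix ι ι ℝ) (τ : ℝ) (x : ι → ℝ) :
    x ⬝ᵥ (A + τ • of fun _ _ => (1 : ℝ)) *ᵥ x = x ⬝ᵥ A *ᵥ x + τ * (∑ i, x i) ^ 2 := by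
  have hones : (of fun _ _ : ι => (1 : ℝ)) *ᵥ x = fun _ => ∑ j, x j := by
    ext i; simp [mulVec, dotProduct]
  rw [add_mulVec, dotProduct_add, smul_mulVec, dotProduct_smul, hones]
  simp [dotProduct, sq, Finset.sum_mul]

theorem exists_posDef_add_smul_ones {A : Matrix ι ι ℝ} (hA : A.IsHermitian)
    (hpos : ∀ x : ι → ℝ, x ≠ 0 → ∑ i, x i = 0 → 0 < x ⬝ᵥ A *ᵥ x) :
    ∃ τ : ℝ, 0 < τ ∧ (A + τ • of fun _ _ => (1 : ℝ)).PosDef := by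
  set M : ℕ → Matrix ι ι ℝ := fun m => A + ((m : ℝ) + 1) • of fun _ _ => 1
  set U : ℕ → Set (ι → ℝ) := fun m => {x | 0 < x ⬝ᵥ M m *ᵥ x}
  have hU_open (m : ℕ) : IsOpen (U m) := isOpen_lt continuous_const (by fun_prop)
  have hU_mono : Monotone U := fun m m' hm x hx => by
    have : (m : ℝ) ≤ m' := by exact_mod_cast hm
    simp only [U, M, Set.mem_ofPred_eq, dotProduct_add_smul_ones_mulVec] at hx ⊢
    nlinarith [sq_nonneg (∑ i, x i)]
  have hU_cover : Metric.sphere (0 : ι → ℝ) 1 ⊆ ⋃ m, U m := by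
    intro x hx
    have hx0 : x ≠ 0 := ne_zero_of_mem_unit_sphere ⟨x, hx⟩
    simp only [U, M, Set.mem_iUnion, Set.mem_ofPred_eq, dotProduct_add_smul_ones_mulVec]
    by_cases hsum : ∑ i, x i = 0
    · exact ⟨0, by simp [hsum, hpos x hx0 hsum]⟩
    · have hsq : 0 < (∑ i, x i) ^ 2 := by positivity
      obtain ⟨m, hm⟩ := exists_nat_gt (-(x ⬝ᵥ A *ᵥ x) / (∑ i, x i) ^ 2)
      rw [div_lt_iff₀ hsq] at hm
      exact ⟨m, by nlinarith⟩
  obtain ⟨m, hm⟩ := (isCompact_sphere (0 : ι → ℝ) 1).elim_directed_cover U hU_open hU_cover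
    hU_mono.directed_le
  refine ⟨m + 1, by positivity, .of_dotProduct_mulVec_pos ?_ fun x hx => ?_⟩
  · exact hA.add ((IsHermitian.ext fun _ _ => rfl).smul (.all _))
  · have hnx : ‖x‖ ≠ 0 := norm_ne_zero_iff.mpr hx
    have hu : ‖x‖⁻¹ • x ∈ U m := hm (by simp [norm_smul, hnx])
    simp only [U, Set.mem_ofPred_eq, mulVec_smul, smul_dotProduct, dotProduct_smul,
      smul_eq_mul] at hu
    rw [star_trivial]
    exact pos_of_mul_pos_right (pos_of_mul_pos_right hu (by positivity)) (by positivity)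

theorem exists_posDef_neg_log_add_add_add_smul_ones {k : ι → ℕ} (hk : Injective k) {c : ℝ}
    (hc : 0 < c) : ∃ τ : ℝ, 0 < τ ∧
      ((of fun i j => -Real.log (c + k i + k j)) + τ • of fun _ _ => (1 : ℝ)).PosDef := by
  refine exists_posDef_add_smul_ones (IsHermitian.ext fun i j => by simp [add_right_comm])
    fun x hx hsum => ?_
  have hform : x ⬝ᵥ (of fun i j => -Real.log (c + k i + k j)) *ᵥ x =
      -∑ i, ∑ j, x i * x j * Real.log (c + k i + k j) := by
    simp only [dotProduct, mulVec, of_apply, Finset.mul_sum, ← Finset.sum_neg_distrib]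
    exact Finset.sum_congr rfl fun i _ => Finset.sum_congr rfl fun j _ => by ring
  linarith [sum_mul_log_add_add_neg hk hx hsum hc]

end

theorem entrywise_log_rankone_correction {n N : ℕ} (hN : 2 * n < N) :
    ∃ τ : ℝ, 0 < τ ∧
      ((Matrix.of fun i j : Fin n =>
          Real.log (1 / ((((N : ℝ) + 1) / 2 - ((i : ℕ) + 1))
            + (((N : ℝ) + 1) / 2 - ((j : ℕ) + 1)))))
        + τ • Matrix.of (fun _ _ : Fin n => (1 : ℝ))).PosSemidef := by
  have hc : (0 : ℝ) < N + 1 - 2 * n := by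
    have : (2 * n : ℝ) < N := by exact_mod_cast hN
    linarith
  obtain ⟨τ, hτ, hpd⟩ := exists_posDef_neg_log_add_add_add_smul_ones
    (k := fun i : Fin n => (Fin.rev i : ℕ)) (Fin.val_injective.comp Fin.rev_injective) hc
  have hrev (i : Fin n) : ((Fin.rev i : ℕ) : ℝ) = n - 1 - i := by
    rw [Fin.val_rev, Nat.cast_sub (by omega)]
    push_cast
    ring
  have hentries : (of fun i j : Fin n => Real.log (1 / ((((N : ℝ) + 1) / 2 - ((i : ℕ) + 1))
      + (((N : ℝ) + 1) / 2 - ((j : ℕ) + 1))))) =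
      of fun i j => -Real.log ((N + 1 - 2 * n : ℝ) + Fin.rev i + Fin.rev j) := by
    ext i j
    rw [of_apply, of_apply, one_div, Real.log_inv, hrev, hrev]
    congr 2
    ring
  exact ⟨τ, hτ, hentries ▸ hpd.posSemidef⟩
end

section
/- For the algebraically decaying couplings J_{i,j} = −|i−j|^{−p} with p ≥ 0 on a chain of N sites (N even), the (N/2)×(N/2) matrix 𝒥 with entries 𝒥_{ij} = J_{i,N+1−j} = −(ζ(i)+ζ(j))^{−p}, ζ(i) = (N+1)/2 − i, is negative semidefinite. -/
/-!
Laplace transform: for `p > 0` and `c > 0`,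
`c ^ (-p) = Γ(p)⁻¹ ∫₀^∞ u ^ (p - 1) e ^ (-c u) du`. With `c = tᵢ + tⱼ` the exponential factorises,
so the quadratic form of `((tᵢ + tⱼ) ^ (-p))ᵢⱼ` at `x` is
`Γ(p)⁻¹ ∫₀^∞ u ^ (p - 1) (∑ᵢ xᵢ e ^ (-tᵢ u))² du ≥ 0`. For the coupling matrix,
`tᵢ = ζ(i) = N/2 - i + 1/2 > 0`; the case `p = 0` is the all-ones matrix.
-/

open Matrix MeasureTheory Real Set

lemma integrableOn_rpow_mul_exp_neg_mul_Ioi {a r : ℝ} (ha : 0 < a) (hr : 0 < r) :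
    IntegrableOn (fun u : ℝ => u ^ (a - 1) * exp (-(r * u))) (Ioi 0) := by
  simpa only [rpow_one, neg_mul] using
    integrableOn_rpow_mul_exp_neg_mul_rpow (p := 1) (by linarith) one_pos hr

lemma rpow_neg_eq_inv_Gamma_mul_integral {a r : ℝ} (ha : 0 < a) (hr : 0 < r) :
    r ^ (-a) = (Gamma a)⁻¹ * ∫ u in Ioi 0, u ^ (a - 1) * exp (-(r * u)) := by
  rw [integral_rpow_mul_exp_neg_mul_Ioi ha hr, one_div, inv_rpow hr.le, ← rpow_neg hr.le,
    mul_comm (r ^ (-a)), inv_mul_cancel_left₀ (Gamma_pos_of_pos ha).ne']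

section LaplaceKernel

variable {ι : Type*} [Fintype ι] {t : ι → ℝ}

lemma sum_sum_mul_add_rpow_neg_eq_integral (ht : ∀ i, 0 < t i) (x : ι → ℝ) {p : ℝ}
    (hp : 0 < p) :
    ∑ i, ∑ j, x i * x j * (t i + t j) ^ (-p) =
      (Gamma p)⁻¹ * ∫ u in Ioi 0, u ^ (p - 1) * (∑ i, x i * exp (-(t i * u))) ^ 2 := by
  have hint : ∀ i j, IntegrableOn
      (fun u => x i * x j * (u ^ (p - 1) * exp (-((t i + t j) * u)))) (Ioi 0) :=
    fun i j => (integrableOn_rpow_mul_exp_neg_mul_Ioi hp (add_pos (ht i) (ht j))).const_mul _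
  have hsquare : ∀ u, u ^ (p - 1) * (∑ i, x i * exp (-(t i * u))) ^ 2 =
      ∑ i, ∑ j, x i * x j * (u ^ (p - 1) * exp (-((t i + t j) * u))) := by
    intro u
    rw [sq, Finset.sum_mul_sum, Finset.mul_sum]
    refine Finset.sum_congr rfl fun i _ => ?_
    rw [Finset.mul_sum]
    refine Finset.sum_congr rfl fun j _ => ?_
    rw [add_mul, neg_add, exp_add]
    ring
  simp_rw [hsquare]
  rw [integral_finsetSum _ fun i _ => integrable_finsetSum _ fun j _ => hint i j,
    Finset.mul_sum]
  refine Finset.sum_congr rfl fun i _ => ?_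
  rw [integral_finsetSum _ fun j _ => hint i j, Finset.mul_sum]
  refine Finset.sum_congr rfl fun j _ => ?_
  rw [integral_const_mul, rpow_neg_eq_inv_Gamma_mul_integral hp (add_pos (ht i) (ht j))]
  ring

theorem posSemidef_of_add_rpow_neg (ht : ∀ i, 0 < t i) {p : ℝ} (hp : 0 ≤ p) :
    (Matrix.of fun i j => (t i + t j) ^ (-p)).PosSemidef := by
  rcases hp.eq_or_lt with rfl | hp
  · convert posSemidef_vecMulVec_self_star (1 : ι → ℝ) using 1
    ext i j
    simp [vecMulVec]
  refine .of_dotProduct_mulVec_nonneg (IsHermitian.ext fun i j => by simp [add_comm]) fun x => ?_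
  have hform : star x ⬝ᵥ ((Matrix.of fun i j => (t i + t j) ^ (-p)) *ᵥ x) =
      ∑ i, ∑ j, x i * x j * (t i + t j) ^ (-p) := by
    simp only [star_trivial, dotProduct, mulVec, of_apply, Finset.mul_sum]
    exact Finset.sum_congr rfl fun i _ => Finset.sum_congr rfl fun j _ => by ring
  rw [hform, sum_sum_mul_add_rpow_neg_eq_integral ht x hp]
  exact mul_nonneg (by positivity) (setIntegral_nonneg measurableSet_Ioi fun u hu =>
    mul_nonneg (rpow_nonneg (le_of_lt hu) _) (sq_nonneg _))

end LaplaceKernel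

theorem coupling_matrix_negative_semidef {n N : ℕ} (hN : N = 2 * n)
    (p : ℝ) (hp : 0 ≤ p) :
    (-(Matrix.of fun i j : Fin n =>
        -(((N : ℝ) + 1 - ((i : ℕ) + 1) - ((j : ℕ) + 1)) ^ (-p)))).PosSemidef := by
  set ζ : Fin n → ℝ := fun i => n - (i : ℕ) - 1 / 2
  have hζ : ∀ i, 0 < ζ i := fun i => by
    have : ((i : ℕ) : ℝ) + 1 ≤ n := by exact_mod_cast i.isLt
    simp only [ζ]
    linarith
  convert posSemidef_of_add_rpow_neg hζ hp using 1
  ext i j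
  rw [Matrix.neg_apply, of_apply, neg_neg, of_apply, hN]
  congr 1
  push_cast
  ring
end
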